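/- The sequence of digits a_n = χ ∘ τ^{n-1} of the doubling map (χ(x) = ⌊1/x⌋) is α-mixing; more precisely, for all n, k ∈ ℕ and all sets A, B of natural numbers, |λ({a_k ∈ B} ∩ {a_{n+k} ∈ A}) - λ(a_k ∈ B)·λ(a_{n+k} ∈ A)| ≤ 2^{-n/2+2}. -/

import Mathlib

/-!
Since `τ` preserves Lebesgue measure on `[0,1)`, shifting by `τ^{k-1}` reduces everything to
`k = 1`. On each dyadic interval `[i/2^n, (i+1)/2^n)` the map `τ^n` is the affine bijection
`x ↦ 2^n x - i` onto `[0,1)`, so a finite union `D` of such intervals is independent of every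
event `τ^{-n} S`. The cylinder `{a_1 = m} = (1/(m+1), 1/m]` contains a union of dyadic intervals
of level `n` missing only `2·2^{-n}` of it, hence `{a_1 ∈ B}` contains such a `D` with
`λ({a_1 ∈ B} \ D) ≤ 1/M + 2M·2^{-n}` (the cylinders with `m ≥ M` lie in `[0, 1/M]`).
Choosing `M = 2^{⌈n/2⌉}` balances the two errors.
-/

open MeasureTheory Set

/-- The doubling map `τ(x) = 2x mod 1`. -/
noncomputable def tau (x : ℝ) : ℝ := Int.fract (2 * x)

/-- The digit sequence `a_n = χ ∘ τ^{n-1}` with `χ(x) = ⌊1/x⌋` (ℕ-valued). -/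
noncomputable def digit (n : ℕ) (x : ℝ) : ℕ := ⌊1 / tau^[n - 1] x⌋₊

open scoped ENNReal

lemma measure_biUnion_finset_inter_eq_mul {α ι : Type*} [MeasurableSpace α] {μ : Measure α}
    {s : Finset ι} {J : ι → Set α} {X : Set α} {c : ℝ≥0∞} (hd : (s : Set ι).PairwiseDisjoint J)
    (hJ : ∀ i ∈ s, MeasurableSet (J i)) (hX : MeasurableSet X)
    (h : ∀ i ∈ s, μ (J i ∩ X) = μ (J i) * c) :
    μ ((⋃ i ∈ s, J i) ∩ X) = μ (⋃ i ∈ s, J i) * c := by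
  rw [iUnion₂_inter, measure_biUnion_finset (hd.mono fun _ ↦ inter_subset_left)
      fun i hi ↦ (hJ i hi).inter hX, measure_biUnion_finset hd hJ, Finset.sum_mul]
  exact Finset.sum_congr rfl h

lemma abs_measureReal_inter_sub_mul_le {α : Type*} [MeasurableSpace α] {μ : Measure α}
    [IsProbabilityMeasure μ] {D F T : Set α} (hDF : D ⊆ F) (hD : MeasurableSet D)
    (hDT : μ (D ∩ T) = μ D * μ T) :
    |μ.real (F ∩ T) - μ.real F * μ.real T| ≤ μ.real (F \ D) := by
  have hFT : μ.real (F ∩ T) = μ.real D * μ.real T + μ.real ((F ∩ T) \ D) := by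
    rw [← measureReal_inter_add_sdiff hD, inter_right_comm, inter_eq_right.2 hDF]
    simp only [measureReal_def, hDT, ENNReal.toReal_mul]
  have hF : μ.real F = μ.real D + μ.real (F \ D) := by
    rw [← measureReal_inter_add_sdiff hD, inter_eq_right.2 hDF]
  have hle : μ.real ((F ∩ T) \ D) ≤ μ.real (F \ D) :=
    measureReal_mono (sdiff_subset_sdiff_left inter_subset_left)
  have hT0 : 0 ≤ μ.real T := measureReal_nonneg
  have hT1 : μ.real T ≤ 1 := measureReal_le_one
  rw [hFT, hF, abs_le]
  constructor <;> nlinarith [measureReal_nonneg (μ := μ) (s := (F ∩ T) \ D),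
    measureReal_nonneg (μ := μ) (s := F \ D)]

noncomputable abbrev unitLebesgue : Measure ℝ := volume.restrict (Ico 0 1)

instance : IsProbabilityMeasure unitLebesgue := ⟨by simp⟩

lemma volume_Ico_inter_fract_preimage (a b : ℤ) {S : Set ℝ} (hS : MeasurableSet S) :
    volume (Ico (a : ℝ) b ∩ Int.fract ⁻¹' S) = volume (Ico (a : ℝ) b) * unitLebesgue S := by
  rcases lt_or_ge b a with hba | hab
  · simp [Ico_eq_empty_of_le (Int.cast_le.2 hba.le)]
  induction b, hab using Int.leInduction with
  | base => simp
  | succ b hab ih =>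
    have hsplit : Ico (a : ℝ) ↑(b + 1) = Ico (a : ℝ) b ∪ Ico (b : ℝ) (b + 1) := by
      push_cast
      exact (Ico_union_Ico_eq_Ico (Int.cast_le.2 hab) (by linarith)).symm
    have hunit : Ico (b : ℝ) (b + 1) ∩ Int.fract ⁻¹' S = (· + -(b : ℝ)) ⁻¹' (S ∩ Ico 0 1) := by
      ext y
      have hfract : y ∈ Ico (b : ℝ) (b + 1) → Int.fract y = y + -b := fun hy ↦ by
        rw [Int.fract, Int.floor_eq_iff.2 hy, sub_eq_add_neg]
      simp only [mem_inter_iff, mem_preimage]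
      constructor
      · rintro ⟨hy, hyS⟩
        refine ⟨hfract hy ▸ hyS, ?_, ?_⟩ <;> linarith [hy.1, hy.2]
      · rintro ⟨hyS, h0, h1⟩
        have hy : y ∈ Ico (b : ℝ) (b + 1) := ⟨by linarith, by linarith⟩
        exact ⟨hy, (hfract hy).symm ▸ hyS⟩
    have hdisj : Disjoint (Ico (a : ℝ) b) (Ico (b : ℝ) (b + 1)) := Ico_disjoint_Ico_same
    rw [hsplit, union_inter_distrib_right,
      measure_union (hdisj.mono inter_subset_left inter_subset_left)
        (measurableSet_Ico.inter (measurable_fract hS)),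
      measure_union hdisj measurableSet_Ico, ih, hunit, measure_preimage_add_right,
      ← Measure.restrict_apply hS, add_mul]
    simp

lemma volume_preimage_mul_Ico_inter_fract_preimage {c : ℝ} (hc : c ≠ 0) (a b : ℤ) {S : Set ℝ}
    (hS : MeasurableSet S) :
    volume ((c * ·) ⁻¹' Ico (a : ℝ) b ∩ {x | Int.fract (c * x) ∈ S}) =
      volume ((c * ·) ⁻¹' Ico (a : ℝ) b) * unitLebesgue S := by
  change volume ((c * ·) ⁻¹' (Ico (a : ℝ) b ∩ Int.fract ⁻¹' S)) = _
  simp only [Real.volume_preimage_mul_left hc, volume_Ico_inter_fract_preimage a b hS, mul_assoc]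

lemma fract_two_mul_fract (y : ℝ) : Int.fract (2 * Int.fract y) = Int.fract (2 * y) :=
  Int.fract_eq_fract.2 ⟨-2 * ⌊y⌋, by rw [Int.fract]; push_cast; ring⟩

lemma tau_iterate_eq_fract (p : ℕ) {x : ℝ} (hx : x ∈ Ico (0 : ℝ) 1) :
    tau^[p] x = Int.fract (2 ^ p * x) := by
  induction p with
  | zero => simp [Int.fract_eq_self.2 hx]
  | succ p ih =>
    rw [Function.iterate_succ_apply', ih, tau, fract_two_mul_fract, pow_succ', mul_assoc]

lemma measurable_tau : Measurable tau := (measurable_const_mul 2).fract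

lemma measurable_digit (n : ℕ) : Measurable (digit n) :=
  Nat.measurable_floor.comp (measurable_const.div (measurable_tau.iterate _))

lemma measure_dyadic_inter_tau_iterate_preimage (n : ℕ) (a b : ℤ)
    (hJ : (2 ^ n * ·) ⁻¹' Ico (a : ℝ) b ⊆ Ico 0 1) {S : Set ℝ} (hS : MeasurableSet S) :
    unitLebesgue ((2 ^ n * ·) ⁻¹' Ico (a : ℝ) b ∩ tau^[n] ⁻¹' S) =
      unitLebesgue ((2 ^ n * ·) ⁻¹' Ico (a : ℝ) b) * unitLebesgue S := by
  have hfract : (2 ^ n * ·) ⁻¹' Ico (a : ℝ) b ∩ tau^[n] ⁻¹' S =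
      (2 ^ n * ·) ⁻¹' Ico (a : ℝ) b ∩ {x | Int.fract (2 ^ n * x) ∈ S} := by
    ext x
    simp only [mem_inter_iff, mem_preimage, mem_ofPred_eq]
    exact and_congr_right fun hx ↦ by rw [tau_iterate_eq_fract n (hJ hx)]
  rw [hfract, Measure.restrict_eq_self _ (inter_subset_left.trans hJ),
    Measure.restrict_eq_self _ hJ,
    volume_preimage_mul_Ico_inter_fract_preimage (by positivity) a b hS]

lemma measurePreserving_tau : MeasurePreserving tau unitLebesgue unitLebesgue := by
  refine ⟨measurable_tau, Measure.ext fun S hS ↦ ?_⟩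
  have hIco : (2 ^ 1 * ·) ⁻¹' Ico ((0 : ℤ) : ℝ) (2 : ℤ) = Ico (0 : ℝ) 1 := by
    ext x; simp
  have h := measure_dyadic_inter_tau_iterate_preimage 1 0 2 hIco.subset hS
  rw [hIco, Function.iterate_one, Measure.restrict_apply_self, Real.volume_Ico, sub_zero,
    ENNReal.ofReal_one, one_mul,
    Measure.restrict_eq_self _ inter_subset_left] at h
  rw [Measure.map_apply measurable_tau hS, Measure.restrict_apply' measurableSet_Ico, inter_comm, h]

/-- The dyadic intervals `[i/2^n, (i+1)/2^n)` with `⌊2^n u⌋ < i < ⌊2^n v⌋`: they lie in `(u, v)`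
and miss less than `2^{-n}` of it at either end. -/
noncomputable def dyadicInterior (n : ℕ) (u v : ℝ) : Set ℝ :=
  (2 ^ n * ·) ⁻¹' Ico ((⌊2 ^ n * u⌋ + 1 : ℤ) : ℝ) (⌊2 ^ n * v⌋ : ℤ)

lemma measurableSet_dyadicInterior (n : ℕ) (u v : ℝ) : MeasurableSet (dyadicInterior n u v) :=
  measurableSet_Ico.preimage (measurable_const_mul _)

lemma dyadicInterior_subset_Ioo (n : ℕ) (u v : ℝ) : dyadicInterior n u v ⊆ Ioo u v := by
  rintro y ⟨hu, hv⟩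
  have h2n : (0 : ℝ) < 2 ^ n := by positivity
  push_cast at hu
  constructor
  · exact lt_of_mul_lt_mul_left ((Int.lt_floor_add_one _).trans_le hu) h2n.le
  · exact lt_of_mul_lt_mul_left (hv.trans_le (Int.floor_le _)) h2n.le

lemma measureReal_Ioc_sdiff_dyadicInterior_le (n : ℕ) (u v : ℝ) :
    volume.real (Ioc u v \ dyadicInterior n u v) ≤ 2 / 2 ^ n := by
  have h2n : (0 : ℝ) < 2 ^ n := by positivity
  have hcover : Ioc u v \ dyadicInterior n u v ⊆
      Ioo u (u + (2 ^ n)⁻¹) ∪ Ioc (v - (2 ^ n)⁻¹) v := by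
    rintro y ⟨⟨huy, hyv⟩, hy⟩
    simp only [dyadicInterior, mem_preimage, mem_Ico, not_and_or, not_le, not_lt] at hy
    push_cast at hy
    have hscale : ∀ w : ℝ, 2 ^ n * (w + (2 ^ n)⁻¹) = 2 ^ n * w + 1 := fun w ↦ by
      rw [mul_add, mul_inv_cancel₀ h2n.ne']
    rcases hy with hy | hy
    · refine Or.inl ⟨huy, lt_of_mul_lt_mul_left ?_ h2n.le⟩
      linarith [Int.floor_le (2 ^ n * u), hscale u]
    · refine Or.inr ⟨lt_of_mul_lt_mul_left ?_ h2n.le, hyv⟩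
      linarith [Int.sub_one_lt_floor (2 ^ n * v), hscale (v - (2 ^ n)⁻¹)]
  have hε : (0 : ℝ) ≤ (2 ^ n)⁻¹ := by positivity
  calc volume.real (Ioc u v \ dyadicInterior n u v)
      ≤ volume.real (Ioo u (u + (2 ^ n)⁻¹)) + volume.real (Ioc (v - (2 ^ n)⁻¹) v) :=
        (measureReal_mono hcover
          (measure_union_lt_top measure_Ioo_lt_top measure_Ioc_lt_top).ne).trans
            (measureReal_union_le _ _)
    _ = 2 / 2 ^ n := by
        rw [Real.volume_real_Ioo_of_le (by linarith), Real.volume_real_Ioc_of_le (by linarith)]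
        ring

lemma digit_one_eq_iff {m : ℕ} (hm : m ≠ 0) {y : ℝ} :
    digit 1 y = m ↔ y ∈ Ioc ((m + 1 : ℝ)⁻¹) (m : ℝ)⁻¹ := by
  change ⌊1 / y⌋₊ = m ↔ _
  rcases le_or_gt y 0 with hy | hy
  · have : ⌊1 / y⌋₊ = 0 := Nat.floor_eq_zero.2 (by linarith [one_div_nonpos.2 hy])
    simp only [this, mem_Ioc]
    constructor
    · exact fun h ↦ absurd h.symm hm
    · rintro ⟨h, -⟩; linarith [inv_pos.2 (by positivity : (0 : ℝ) < m + 1)]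
  · have hm0 : (0 : ℝ) < m := by positivity
    rw [Nat.floor_eq_iff (by positivity), mem_Ioc, and_comm, one_div,
      inv_lt_comm₀ hy (by positivity), le_inv_comm₀ hm0 hy]

lemma dyadicInterior_inv_subset_digit_one_preimage (n m : ℕ) :
    dyadicInterior n ((m : ℝ) + 1)⁻¹ (m : ℝ)⁻¹ ⊆ digit 1 ⁻¹' {m} := by
  intro y hy
  have hy := dyadicInterior_subset_Ioo n _ _ hy
  rcases Nat.eq_zero_or_pos m with rfl | hm
  · simp only [Nat.cast_zero, zero_add, inv_one, inv_zero, mem_Ioo] at hy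
    linarith [hy.1, hy.2]
  · exact (digit_one_eq_iff hm.ne').2 (Ioo_subset_Ioc_self hy)

lemma dyadicInterior_inv_subset_Ico (n m : ℕ) :
    dyadicInterior n ((m : ℝ) + 1)⁻¹ (m : ℝ)⁻¹ ⊆ Ico 0 1 := fun y hy ↦
  have hy := dyadicInterior_subset_Ioo n _ _ hy
  ⟨(inv_pos.2 (by positivity)).le.trans hy.1.le, hy.2.trans_le (Nat.cast_inv_le_one m)⟩

lemma measureReal_digit_one_preimage_sdiff_le (n : ℕ) {M : ℕ} (hM : 0 < M) (B : Set ℕ)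
    [DecidablePred (· ∈ B)] :
    unitLebesgue.real (digit 1 ⁻¹' B \
        ⋃ m ∈ (Finset.range M).filter (· ∈ B), dyadicInterior n ((m : ℝ) + 1)⁻¹ (m : ℝ)⁻¹) ≤
      (M : ℝ)⁻¹ + M * (2 / 2 ^ n) := by
  set J := fun m : ℕ ↦ dyadicInterior n ((m : ℝ) + 1)⁻¹ (m : ℝ)⁻¹
  have hcover : (digit 1 ⁻¹' B \ ⋃ m ∈ (Finset.range M).filter (· ∈ B), J m) ∩ Ico 0 1 ⊆
      Icc 0 (M : ℝ)⁻¹ ∪ ⋃ m ∈ Finset.range M, Ioc ((m : ℝ) + 1)⁻¹ (m : ℝ)⁻¹ \ J m := by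
    rintro y ⟨⟨hyB, hyD⟩, hy0, hy1⟩
    rcases le_or_gt y (M : ℝ)⁻¹ with hyM | hyM
    · exact Or.inl ⟨hy0, hyM⟩
    have hypos : 0 < y := (inv_pos.2 (by exact_mod_cast hM)).trans hyM
    have hm0 : digit 1 y ≠ 0 :=
      (Nat.floor_pos.2 ((one_le_div hypos).2 hy1.le)).ne'
    have hmM : digit 1 y < M := (Nat.floor_lt (by positivity)).2 <|
      (one_div_lt hypos (by exact_mod_cast hM)).2 (by rwa [one_div])
    have hmem := (digit_one_eq_iff hm0).1 rfl
    refine Or.inr (mem_iUnion₂.2 ⟨digit 1 y, Finset.mem_range.2 hmM, hmem, fun hyJ ↦ hyD ?_⟩)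
    exact mem_iUnion₂.2 ⟨digit 1 y, Finset.mem_filter.2 ⟨Finset.mem_range.2 hmM, hyB⟩, hyJ⟩
  have hfin : volume (Icc 0 (M : ℝ)⁻¹ ∪
      ⋃ m ∈ Finset.range M, Ioc ((m : ℝ) + 1)⁻¹ (m : ℝ)⁻¹ \ J m) ≠ ∞ :=
    (measure_union_lt_top measure_Icc_lt_top (measure_biUnion_lt_top (Finset.finite_toSet _)
      fun _ _ ↦ (measure_mono sdiff_subset).trans_lt measure_Ioc_lt_top)).ne
  calc unitLebesgue.real (digit 1 ⁻¹' B \ ⋃ m ∈ (Finset.range M).filter (· ∈ B), J m)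
      = volume.real ((digit 1 ⁻¹' B \ ⋃ m ∈ (Finset.range M).filter (· ∈ B), J m) ∩ Ico 0 1) :=
        measureReal_restrict_apply' measurableSet_Ico
    _ ≤ volume.real (Icc 0 (M : ℝ)⁻¹) +
          ∑ m ∈ Finset.range M, volume.real (Ioc ((m : ℝ) + 1)⁻¹ (m : ℝ)⁻¹ \ J m) :=
        (measureReal_mono hcover hfin).trans <|
          (measureReal_union_le _ _).trans (add_le_add le_rfl (measureReal_biUnion_finset_le _ _))
    _ ≤ (M : ℝ)⁻¹ + ∑ _m ∈ Finset.range M, 2 / 2 ^ n := by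
        rw [Real.volume_real_Icc_of_le (by positivity), sub_zero]
        gcongr with m
        exact measureReal_Ioc_sdiff_dyadicInterior_le n _ _
    _ = (M : ℝ)⁻¹ + M * (2 / 2 ^ n) := by simp

theorem abs_measureReal_digit_one_preimage_inter_sub_le (n : ℕ) {M : ℕ} (hM : 0 < M)
    (B : Set ℕ) {S : Set ℝ} (hS : MeasurableSet S) :
    |unitLebesgue.real (digit 1 ⁻¹' B ∩ tau^[n] ⁻¹' S) -
        unitLebesgue.real (digit 1 ⁻¹' B) * unitLebesgue.real (tau^[n] ⁻¹' S)| ≤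
      (M : ℝ)⁻¹ + M * (2 / 2 ^ n) := by
  classical
  set J := fun m : ℕ ↦ dyadicInterior n ((m : ℝ) + 1)⁻¹ (m : ℝ)⁻¹
  set T := (Finset.range M).filter (· ∈ B)
  have hJ : ∀ m, MeasurableSet (J m) := fun m ↦ measurableSet_dyadicInterior _ _ _
  have hDB : ⋃ m ∈ T, J m ⊆ digit 1 ⁻¹' B := iUnion₂_subset fun m hm ↦
    (dyadicInterior_inv_subset_digit_one_preimage n m).trans
      (preimage_mono (singleton_subset_iff.2 (Finset.mem_filter.1 hm).2))
  have hDS : unitLebesgue ((⋃ m ∈ T, J m) ∩ tau^[n] ⁻¹' S) =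
      unitLebesgue (⋃ m ∈ T, J m) * unitLebesgue (tau^[n] ⁻¹' S) := by
    rw [(measurePreserving_tau.iterate n).measure_preimage hS.nullMeasurableSet]
    refine measure_biUnion_finset_inter_eq_mul (fun m _ m' _ hne ↦ ?_) (fun m _ ↦ hJ m)
      (measurable_tau.iterate n hS) fun m _ ↦
        measure_dyadic_inter_tau_iterate_preimage n _ _ (dyadicInterior_inv_subset_Ico n m) hS
    exact ((disjoint_singleton.2 hne).preimage (digit 1)).mono
      (dyadicInterior_inv_subset_digit_one_preimage n m)
      (dyadicInterior_inv_subset_digit_one_preimage n m')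
  exact (abs_measureReal_inter_sub_mul_le hDB (.biUnion T.countable_toSet fun m _ ↦ hJ m)
    hDS).trans (measureReal_digit_one_preimage_sdiff_le n hM B)

lemma inv_add_mul_two_div_two_pow_le (n : ℕ) :
    ((2 ^ ((n + 1) / 2) : ℕ) : ℝ)⁻¹ + (2 ^ ((n + 1) / 2) : ℕ) * (2 / 2 ^ n) ≤
      (2 : ℝ) ^ (-(n : ℝ) / 2 + 2) := by
  simp only [Nat.cast_pow, Nat.cast_ofNat]
  set r : ℝ := 2 ^ (-(n : ℝ) / 2)
  set T : ℝ := 2 ^ ((n + 1) / 2)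
  have hr : 0 < r := by positivity
  have hT : 0 < T := by positivity
  have hr2 : r ^ 2 = (2 ^ n)⁻¹ := by
    rw [← Real.rpow_natCast, ← Real.rpow_mul zero_le_two, Nat.cast_ofNat,
      div_mul_cancel₀ _ two_ne_zero, Real.rpow_neg zero_le_two, Real.rpow_natCast]
  have hrT : (r * T) ^ 2 = T ^ 2 / 2 ^ n := by rw [mul_pow, hr2, inv_mul_eq_div]
  have hT2 : T ^ 2 = 2 ^ ((n + 1) / 2 * 2) := (pow_mul _ _ _).symm
  have hlow : 1 ≤ (r * T) ^ 2 := by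
    rw [hrT, one_le_div (by positivity), hT2]
    exact pow_le_pow_right₀ one_le_two (by omega)
  have hup : (r * T) ^ 2 ≤ 2 := by
    rw [hrT, div_le_iff₀ (by positivity), hT2, ← pow_succ']
    exact pow_le_pow_right₀ one_le_two (by omega)
  -- with `u = r T` the claim reads `1 + 2 u² ≤ 4 u`, which holds for `1 ≤ u² ≤ 2`
  have key : 0 ≤ 4 * (r * T) - (1 + 2 * (r * T) ^ 2) := by
    nlinarith [mul_pos hr hT]
  have hrhs : (2 : ℝ) ^ (-(n : ℝ) / 2 + 2) = 4 * r := by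
    rw [Real.rpow_add two_pos, Real.rpow_two]; ring
  have hgap :
      4 * r - (T⁻¹ + T * (2 / 2 ^ n)) = (4 * (r * T) - (1 + 2 * (r * T) ^ 2)) / T := by
    rw [div_eq_mul_inv 2, ← hr2]; field_simp
  rw [hrhs, ← sub_nonneg, hgap]
  exact div_nonneg key hT.le

theorem stmt19_general (n k : ℕ) (hk : 1 ≤ k) (A B : Set ℕ) :
    |(volume {x : ℝ | x ∈ Set.Ico (0 : ℝ) 1 ∧ digit k x ∈ B ∧ digit (n + k) x ∈ A}).toReal -
        (volume {x : ℝ | x ∈ Set.Ico (0 : ℝ) 1 ∧ digit k x ∈ B}).toReal *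
          (volume {x : ℝ | x ∈ Set.Ico (0 : ℝ) 1 ∧ digit (n + k) x ∈ A}).toReal| ≤
      (2 : ℝ) ^ (-(n : ℝ) / 2 + 2) := by
  have hrestrict : ∀ P : ℝ → Prop,
      volume {x | x ∈ Ico (0 : ℝ) 1 ∧ P x} = unitLebesgue {x | P x} := fun P ↦ by
    rw [Measure.restrict_apply' measurableSet_Ico, inter_comm]; rfl
  set E := digit 1 ⁻¹' B
  set F := tau^[n] ⁻¹' (digit 1 ⁻¹' A)
  have hE : MeasurableSet E := measurable_digit 1 (.of_discrete)
  have hF : MeasurableSet F := measurable_tau.iterate n (measurable_digit 1 (.of_discrete))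
  have hdigit : ∀ x, digit (n + k) x = digit 1 (tau^[n] (tau^[k - 1] x)) := fun x ↦ by
    rw [← Function.iterate_add_apply, show n + (k - 1) = n + k - 1 by omega]; rfl
  have hpres := fun s (hs : MeasurableSet s) ↦
    (measurePreserving_tau.iterate (k - 1)).measure_preimage hs.nullMeasurableSet
  have hBA : {x | digit k x ∈ B ∧ digit (n + k) x ∈ A} = tau^[k - 1] ⁻¹' (E ∩ F) := by
    ext x; simp only [hdigit]; rfl
  have hA : {x | digit (n + k) x ∈ A} = tau^[k - 1] ⁻¹' F := by
    ext x; simp only [hdigit]; rfl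
  have hB : {x | digit k x ∈ B} = tau^[k - 1] ⁻¹' E := rfl
  rw [hrestrict, hrestrict, hrestrict, hBA, hA, hB, hpres _ (hE.inter hF), hpres _ hE, hpres _ hF]
  exact (abs_measureReal_digit_one_preimage_inter_sub_le n (M := 2 ^ ((n + 1) / 2))
    (by positivity) B (measurable_digit 1 .of_discrete)).trans (inv_add_mul_two_div_two_pow_le n)

/-- The digit sequence `(a_n)` of the doubling map is α-mixing; more precisely, for all
`n, k ≥ 1` and all sets `A, B ⊆ ℕ`,
`|λ({a_k ∈ B} ∩ {a_{n+k} ∈ A}) - λ(a_k ∈ B)·λ(a_{n+k} ∈ A)| ≤ 2^{-n/2+2}`. -/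
theorem stmt19 (n k : ℕ) (hn : 1 ≤ n) (hk : 1 ≤ k) (A B : Set ℕ) :
    |(volume {x : ℝ | x ∈ Set.Ico (0 : ℝ) 1 ∧ digit k x ∈ B ∧ digit (n + k) x ∈ A}).toReal -
        (volume {x : ℝ | x ∈ Set.Ico (0 : ℝ) 1 ∧ digit k x ∈ B}).toReal *
          (volume {x : ℝ | x ∈ Set.Ico (0 : ℝ) 1 ∧ digit (n + k) x ∈ A}).toReal| ≤
      (2 : ℝ) ^ (-(n : ℝ) / 2 + 2) :=
  stmt19_general n k hk A B
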